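/- For all real x > -2, it holds that 1 < h(x) < ((x+3)/(x+2))². -/

import Mathlib

/-!
With `φ n = log ((2n + x) / (2n + 1 + x))`, negative and increasing for `n ≥ 1`, the relation
`u (2m + 1) = -u (2m)` pairs the terms of the logarithm of the partial product up to `2K + 1` into
`-φ 1 + ∑_{k<K} u (2k + 2) (φ (2k + 2) - φ (2k + 3))`. The paired sum is dominated by the telescoping
sum `φ (2K + 2) - φ 2 ≤ -φ 2`, so these partial products, and hence `h x`, lie in
`[exp (φ 2 - φ 1), exp (-φ 1 - φ 2)]`. Since `φ 1 < φ 2`, the lower end exceeds `1` and the upper end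
is below `exp (-2 φ 1) = ((x + 3) / (x + 2))²`.
-/

open Filter Finset Topology

/-- The Thue–Morse sequence with values `±1`: `u n = (-1)^(s₂ n)` where `s₂ n`
is the sum of the binary digits of `n`. -/
def u (n : ℕ) : ℤ := (-1) ^ (Nat.digits 2 n).sum

open Real

lemma u_two_mul (n : ℕ) : u (2 * n) = u n := by
  rcases Nat.eq_zero_or_pos n with rfl | hn
  · rfl
  · have := Nat.digits_add 2 one_lt_two 0 n two_pos (Or.inr hn.ne')
    rw [zero_add] at this
    rw [u, u, this, List.sum_cons, zero_add]

lemma u_two_mul_add_one (n : ℕ) : u (2 * n + 1) = -u n := by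
  have := Nat.digits_add 2 one_lt_two 1 n one_lt_two (Or.inl one_ne_zero)
  rw [add_comm] at this
  rw [u, u, this, List.sum_cons, pow_add, pow_one, neg_one_mul]

lemma u_one : u 1 = -1 := by
  norm_num [u]

lemma abs_u (n : ℕ) : |(u n : ℝ)| = 1 := by
  simp [u]

lemma sum_Icc_u_mul_eq (f : ℕ → ℝ) (K : ℕ) :
    ∑ n ∈ Icc 1 (2 * K + 1), (u n : ℝ) * f n =
      -f 1 + ∑ k ∈ range K, (u (2 * k + 2) : ℝ) * (f (2 * k + 2) - f (2 * k + 3)) := by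
  induction K with
  | zero => simp [u_one]
  | succ K ih =>
    have hu : u (2 * K + 3) = -u (2 * K + 2) := by
      rw [show 2 * K + 3 = 2 * (K + 1) + 1 by ring, show 2 * K + 2 = 2 * (K + 1) by ring,
        u_two_mul_add_one, u_two_mul]
    rw [show 2 * (K + 1) + 1 = 2 * K + 1 + 1 + 1 by ring, sum_Icc_succ_top (by omega),
      sum_Icc_succ_top (by omega), ih, sum_range_succ]
    push_cast [hu]
    ring

lemma abs_sum_range_mul_sub_le {b : ℕ → ℝ} (hb : Monotone b) {c : ℕ → ℝ}
    (hc : ∀ k, |c k| ≤ 1) (K : ℕ) :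
    |∑ k ∈ range K, c k * (b (2 * k) - b (2 * k + 1))| ≤ b (2 * K) - b 0 := by
  calc |∑ k ∈ range K, c k * (b (2 * k) - b (2 * k + 1))|
      ≤ ∑ k ∈ range K, (b (2 * (k + 1)) - b (2 * k)) := by
        refine (abs_sum_le_sum_abs _ _).trans (sum_le_sum fun k _ => ?_)
        calc |c k * (b (2 * k) - b (2 * k + 1))|
            ≤ |b (2 * k) - b (2 * k + 1)| := by
              rw [abs_mul]; exact mul_le_of_le_one_left (abs_nonneg _) (hc k)
          _ = b (2 * k + 1) - b (2 * k) := by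
              rw [abs_sub_comm, abs_of_nonneg (sub_nonneg.2 (hb (Nat.le_succ _)))]
          _ ≤ b (2 * (k + 1)) - b (2 * k) := by
              linarith [hb (show 2 * k + 1 ≤ 2 * (k + 1) by omega)]
    _ = b (2 * K) - b 0 := sum_range_sub (fun k => b (2 * k)) K

section logRatio

variable {x : ℝ}

noncomputable def logRatio (x : ℝ) (n : ℕ) : ℝ := log ((2 * n + x) / (2 * n + 1 + x))

lemma logRatio_nonpos (hx : -2 < x) {n : ℕ} (hn : 1 ≤ n) : logRatio x n ≤ 0 := by
  have : (1 : ℝ) ≤ n := by exact_mod_cast hn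
  refine log_nonpos (div_nonneg (by linarith) (by linarith)) ((div_le_one (by linarith)).2 ?_)
  linarith

lemma logRatio_lt_succ (hx : -2 < x) {n : ℕ} (hn : 1 ≤ n) :
    logRatio x n < logRatio x (n + 1) := by
  have : (1 : ℝ) ≤ n := by exact_mod_cast hn
  unfold logRatio
  refine log_lt_log (div_pos (by linarith) (by linarith)) ?_
  rw [div_lt_div_iff₀ (by linarith) (by push_cast; linarith)]
  push_cast
  nlinarith

lemma prod_zpow_u_eq_exp (hx : -2 < x) (N : ℕ) :
    ∏ n ∈ Icc 1 N, ((2 * (n : ℝ) + x) / (2 * (n : ℝ) + 1 + x)) ^ (u n) =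
      exp (∑ n ∈ Icc 1 N, (u n : ℝ) * logRatio x n) := by
  rw [exp_sum]
  refine prod_congr rfl fun n hn => ?_
  have : (1 : ℝ) ≤ n := by exact_mod_cast (mem_Icc.1 hn).1
  rw [logRatio, ← log_zpow, exp_log (zpow_pos (div_pos (by linarith) (by linarith)) _)]

lemma sum_u_mul_logRatio_mem_Icc (hx : -2 < x) (K : ℕ) :
    ∑ n ∈ Icc 1 (2 * K + 1), (u n : ℝ) * logRatio x n ∈
      Set.Icc (logRatio x 2 - logRatio x 1) (-logRatio x 1 - logRatio x 2) := by
  have hmono : Monotone fun k => logRatio x (k + 2) :=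
    monotone_nat_of_le_succ fun k => (logRatio_lt_succ hx (by omega)).le
  have hbound := abs_sum_range_mul_sub_le hmono (c := fun k => (u (2 * k + 2) : ℝ))
    (fun k => (abs_u _).le) K
  have hK := logRatio_nonpos hx (show 1 ≤ 2 * K + 2 by omega)
  rw [sum_Icc_u_mul_eq]
  constructor <;> linarith [abs_le.1 hbound]

lemma exp_neg_two_mul_logRatio_one (hx : -2 < x) :
    exp (-2 * logRatio x 1) = ((x + 3) / (x + 2)) ^ 2 := by
  have hr : (2 * ((1 : ℕ) : ℝ) + x) / (2 * ((1 : ℕ) : ℝ) + 1 + x) = ((x + 3) / (x + 2))⁻¹ := by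
    rw [inv_div]; push_cast; ring_nf
  have hy : 0 < (x + 3) / (x + 2) := div_pos (by linarith) (by linarith)
  rw [logRatio, hr, log_inv, mul_neg, neg_mul, neg_neg, two_mul, exp_add, exp_log hy, sq]

end logRatio

theorem stmt_11_general (h : ℝ → ℝ)
    (hh : ∀ x : ℝ, -2 < x →
      Tendsto (fun N : ℕ => ∏ n ∈ Finset.Icc 1 N,
        ((2 * (n : ℝ) + x) / (2 * (n : ℝ) + 1 + x)) ^ (u n)) atTop (𝓝 (h x))) :
    ∀ x : ℝ, -2 < x → 1 < h x ∧ h x < ((x + 3) / (x + 2)) ^ 2 := by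
  intro x hx
  have hodd : Tendsto (fun K : ℕ => 2 * K + 1) atTop atTop :=
    StrictMono.tendsto_atTop fun _ _ hab => by omega
  have hlim := (hh x hx).comp hodd
  simp only [Function.comp_def, prod_zpow_u_eq_exp hx] at hlim
  have hlower : exp (logRatio x 2 - logRatio x 1) ≤ h x :=
    ge_of_tendsto' hlim fun K => exp_le_exp.2 (sum_u_mul_logRatio_mem_Icc hx K).1
  have hupper : h x ≤ exp (-logRatio x 1 - logRatio x 2) :=
    le_of_tendsto' hlim fun K => exp_le_exp.2 (sum_u_mul_logRatio_mem_Icc hx K).2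
  have h12 := logRatio_lt_succ hx le_rfl
  refine ⟨(one_lt_exp_iff.2 (by linarith)).trans_le hlower, hupper.trans_lt ?_⟩
  rw [← exp_neg_two_mul_logRatio_one hx]
  exact exp_lt_exp.2 (by linarith)

/-- If `h x` is, for `x > -2`, the (positive) limit of the partial products
`∏_{n=1}^{N} ((2n+x)/(2n+1+x))^{u_n}`, then `1 < h(x) < ((x+3)/(x+2))²`
for all `x > -2`. -/
theorem stmt_11 (h : ℝ → ℝ)
    (hh : ∀ x : ℝ, -2 < x →
      Tendsto (fun N : ℕ => ∏ n ∈ Finset.Icc 1 N,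
        ((2 * (n : ℝ) + x) / (2 * (n : ℝ) + 1 + x)) ^ (u n)) atTop (𝓝 (h x)))
    (hpos : ∀ x : ℝ, -2 < x → 0 < h x) :
    ∀ x : ℝ, -2 < x → 1 < h x ∧ h x < ((x + 3) / (x + 2)) ^ 2 :=
  stmt_11_general h hh
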